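/- arXiv:1805.12236 — 2 statements merged into one kernel-verified Lean document; each statement's English description precedes it below -/
import Mathlib

section
/- Let (x,y) be an exact pair of zero divisors in a commutative ring S, R = S/(x), with lifting (F̃, d̃) of a free R-complex, ψ̃ with x·ψ̃ = d̃², and φ̃ with d̃ψ̃ − ψ̃d̃ = y·φ̃. Then y·(d̃φ̃ + φ̃d̃) = 0, and consequently there exists ρ̃ of degree −4 with d̃φ̃ + φ̃d̃ = x·ρ̃; hence φ := φ̃ ⊗_S R satisfies dφ + φd = 0 and is (up to the appropriate sign convention) a degree −3 chain map on F. -/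
/-!
Since `x ψ̃ = d̃²`, both `d̃²ψ̃` and `ψ̃d̃²` equal `x ψ̃ψ̃`, hence
`y (d̃φ̃ + φ̃d̃) = d̃(d̃ψ̃ - ψ̃d̃) + (d̃ψ̃ - ψ̃d̃)d̃ = d̃²ψ̃ - ψ̃d̃² = 0`.
In a free module the annihilator of `y` is computed coordinatewise, so `ann(y) = (x)` makes
`d̃φ̃ + φ̃d̃` divisible by `x` pointwise; projectivity of the source assembles the pointwise
quotients into a single linear map `ρ̃`.
-/

/-- `(x, y)` is an exact pair of zero divisors in `S`:
`ann_S(x) = (y)` and `ann_S(y) = (x)`. -/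
def IsExactZeroDivisorPair {S : Type*} [CommRing S] (x y : S) : Prop :=
  (Ideal.span {x} : Ideal S).annihilator = Ideal.span {y} ∧
    (Ideal.span {y} : Ideal S).annihilator = Ideal.span {x}

open Submodule

section Divisibility

variable {S : Type*} [CommRing S] {x y : S}
  {M : Type*} [AddCommGroup M] [Module S M]

theorem exists_eq_smul_of_smul_eq_zero [Module.Free S M]
    (h : (Ideal.span {y} : Ideal S).annihilator ≤ Ideal.span {x})
    {m : M} (hm : y • m = 0) : ∃ m', m = x • m' := by
  let b := Module.Free.chooseBasis S M
  have hcoord : ∀ j, x ∣ b.repr m j := fun j => by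
    rw [← Ideal.mem_span_singleton]
    refine h ((mem_annihilator_span_singleton y _).2 ?_)
    simpa [mul_comm] using congrArg (fun z => b.repr z j) hm
  suffices m ∈ LinearMap.range (LinearMap.lsmul S M x) from
    this.imp fun _ hm' => hm'.symm
  rw [← b.linearCombination_repr m, Finsupp.linearCombination_apply]
  refine Submodule.finsuppSum_mem (f := b.repr m) (h := fun j _ => ?_)
  obtain ⟨c, hc⟩ := hcoord j
  exact ⟨c • b j, by rw [LinearMap.lsmul_apply, hc, mul_smul]⟩

theorem exists_linearMap_eq_smul_of_forall_exists {P : Type*} [AddCommGroup P] [Module S P]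
    [Module.Projective S P] (f : P →ₗ[S] M) (hf : ∀ v, ∃ w, f v = x • w) :
    ∃ g : P →ₗ[S] M, ∀ v, f v = x • g v := by
  let p := LinearMap.lsmul S M x
  have hrange : ∀ v, f v ∈ LinearMap.range p := fun v => by
    obtain ⟨w, hw⟩ := hf v
    exact ⟨w, hw.symm⟩
  obtain ⟨g, hg⟩ := Module.projective_lifting_property p.rangeRestrict (f.codRestrict _ hrange)
    p.surjective_rangeRestrict
  exact ⟨g, fun v => congrArg Subtype.val (LinearMap.congr_fun hg v).symm⟩

end Divisibility

theorem smul_d_φ_add_φ_d_eq_zero {S : Type*} [CommRing S] {x y : S}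
    {F : ℤ → Type*} [∀ i, AddCommGroup (F i)] [∀ i, Module S (F i)]
    (d : ∀ i : ℤ, F (i + 1) →ₗ[S] F i)
    (ψ : ∀ i : ℤ, F (i + 1 + 1) →ₗ[S] F i)
    (hψ : ∀ (i : ℤ) (v : F (i + 1 + 1)), x • ψ i v = d i (d (i + 1) v))
    (φ : ∀ i : ℤ, F (i + 1 + 1 + 1) →ₗ[S] F i)
    (hφ : ∀ (i : ℤ) (v : F (i + 1 + 1 + 1)),
      d i (ψ (i + 1) v) - ψ i (d (i + 1 + 1) v) = y • φ i v)
    (i : ℤ) (v : F (i + 1 + 1 + 1 + 1)) :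
    y • (d i (φ (i + 1) v) + φ i (d (i + 1 + 1 + 1) v)) = 0 := by
  have hdψ : d i (d (i + 1) (ψ (i + 1 + 1) v)) = x • ψ i (ψ (i + 1 + 1) v) :=
    (hψ i _).symm
  have hψd : ψ i (d (i + 1 + 1) (d (i + 1 + 1 + 1) v)) = x • ψ i (ψ (i + 1 + 1) v) := by
    rw [← hψ (i + 1 + 1) v, map_smul]
  rw [smul_add, ← map_smul, ← hφ, ← hφ, map_sub, hdψ, hψd]
  abel

/-- Let `(x,y)` be an exact pair of zero divisors in `S`, `R = S/(x)`, `(F̃, d̃)` a lifting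
of a free `R`-complex, `ψ̃` with `x·ψ̃ = d̃²`, and `φ̃` with `d̃ψ̃ − ψ̃d̃ = y·φ̃`.  Then
`y·(d̃φ̃ + φ̃d̃) = 0`, there exists `ρ̃` of degree `−4` with `d̃φ̃ + φ̃d̃ = x·ρ̃`, and hence
the reduction `φ := φ̃ ⊗_S R` satisfies `dφ + φd = 0`, i.e. `φ` is a degree `−3` chain map
on the reduced complex. -/
theorem phi_is_chain_map {S : Type*} [CommRing S] {x y : S}
    (hxy : IsExactZeroDivisorPair x y)
    (F : ℤ → Type*) [∀ i, AddCommGroup (F i)] [∀ i, Module S (F i)]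
    [∀ i, Module.Free S (F i)]
    (d : ∀ i : ℤ, F (i + 1) →ₗ[S] F i)
    (ψ : ∀ i : ℤ, F (i + 1 + 1) →ₗ[S] F i)
    (hψ : ∀ (i : ℤ) (v : F (i + 1 + 1)), x • ψ i v = d i (d (i + 1) v))
    (φ : ∀ i : ℤ, F (i + 1 + 1 + 1) →ₗ[S] F i)
    (hφ : ∀ (i : ℤ) (v : F (i + 1 + 1 + 1)),
      d i (ψ (i + 1) v) - ψ i (d (i + 1 + 1) v) = y • φ i v) :
    (∀ (i : ℤ) (v : F (i + 1 + 1 + 1 + 1)),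
        y • (d i (φ (i + 1) v) + φ i (d (i + 1 + 1 + 1) v)) = 0) ∧
    (∃ ρ : ∀ i : ℤ, F (i + 1 + 1 + 1 + 1) →ₗ[S] F i,
        ∀ (i : ℤ) (v : F (i + 1 + 1 + 1 + 1)),
          d i (φ (i + 1) v) + φ i (d (i + 1 + 1 + 1) v) = x • ρ i v) ∧
    (∀ (i : ℤ) (v : F (i + 1 + 1 + 1 + 1)),
        (Ideal.span {x} • ⊤ : Submodule S (F i)).mkQ
          (d i (φ (i + 1) v) + φ i (d (i + 1 + 1 + 1) v)) = 0) := by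
  have hkill := smul_d_φ_add_φ_d_eq_zero d ψ hψ φ hφ
  have hρ : ∀ i, ∃ ρ : F (i + 1 + 1 + 1 + 1) →ₗ[S] F i,
      ∀ v, d i (φ (i + 1) v) + φ i (d (i + 1 + 1 + 1) v) = x • ρ v := fun i =>
    exists_linearMap_eq_smul_of_forall_exists ((d i).comp (φ (i + 1)) + (φ i).comp (d _))
      fun v => exists_eq_smul_of_smul_eq_zero hxy.2.le (hkill i v)
  choose ρ hρ using hρ
  refine ⟨hkill, ⟨ρ, hρ⟩, fun i v => ?_⟩
  rw [hρ, mkQ_apply, Quotient.mk_eq_zero]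
  exact smul_mem_smul (Ideal.mem_span_singleton_self x) mem_top
end

section
/- Let f: (F,d) → (G,d') be a degree-k morphism of complexes of finitely generated free R-modules, with liftings and operators ψ, ψ' constructed as in the paper. Then for every z ∈ ann_R(ȳ), f∘ψ_z − ψ'_z∘f is null-homotopic: there exists a degree k−1 family θ with f∘ψ_z − ψ'_z∘f = d'∘(−zθ) − (−1)^{k−1}(−zθ)∘d. -/
theorem mul_mem_span_singleton_of_mul_eq_zero {S : Type*} [CommRing S] {x y z c : S}
    (hann : (Ideal.span {x} : Ideal S).annihilator = Ideal.span {y})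
    (hz : z * y ∈ (Ideal.span {x} : Ideal S)) (hc : x * c = 0) :
    z * c ∈ (Ideal.span {x} : Ideal S) := by
  have hcy : c ∈ (Ideal.span {y} : Ideal S) := by
    rw [← hann, Submodule.mem_annihilator_span_singleton, smul_eq_mul, mul_comm, hc]
  obtain ⟨a, rfl⟩ := Ideal.mem_span_singleton'.mp hcy
  rw [mul_left_comm]
  exact Ideal.mul_mem_left _ a hz

theorem Module.Free.smul_mem_span_smul_top_of_smul_eq_zero {S M : Type*} [CommRing S]
    [AddCommGroup M] [Module S M] [Module.Free S M] {x y z : S}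
    (hann : (Ideal.span {x} : Ideal S).annihilator = Ideal.span {y})
    (hz : z * y ∈ (Ideal.span {x} : Ideal S)) {w : M} (hw : x • w = 0) :
    z • w ∈ (Ideal.span {x} • ⊤ : Submodule S M) := by
  let B := Module.Free.chooseBasis S M
  rw [← B.span_eq, Submodule.mem_ideal_smul_span_iff_exists_sum]
  refine ⟨z • B.repr w, fun b => ?_, ?_⟩
  · have hxw : x * B.repr w b = 0 := by
      simpa using congrArg (fun m => B.repr m b) hw
    exact mul_mem_span_singleton_of_mul_eq_zero hann hz hxw
  · rw [← Finsupp.linearCombination_apply, map_smul, B.linearCombination_repr]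

section Naturality

variable {S : Type*} [CommRing S] {x : S}
  {F G : ℤ → Type*} [∀ i, AddCommGroup (F i)] [∀ i, Module S (F i)]
  [∀ i, AddCommGroup (G i)] [∀ i, Module S (G i)]
  {d : ∀ i : ℤ, F (i + 1) →ₗ[S] F i} {d' : ∀ i : ℤ, G (i + 1) →ₗ[S] G i}
  {ψ : ∀ i : ℤ, F (i + 1 + 1) →ₗ[S] F i} {ψ' : ∀ i : ℤ, G (i + 1 + 1) →ₗ[S] G i}
  {f : ∀ i : ℤ, F i →ₗ[S] G i} {θ : ∀ i : ℤ, F (i + 1) →ₗ[S] G i} {u : ℤˣ}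

theorem smul_naturality_defect_eq_zero
    (hψ : ∀ (i : ℤ) (v : F (i + 1 + 1)), x • ψ i v = d i (d (i + 1) v))
    (hψ' : ∀ (i : ℤ) (v : G (i + 1 + 1)), x • ψ' i v = d' i (d' (i + 1) v))
    (hf : ∀ (i : ℤ) (v : F (i + 1)), d' i (f (i + 1) v) - (u : ℤ) • f i (d i v) = x • θ i v)
    (i : ℤ) (v : F (i + 1 + 1)) :
    x • (f i (ψ i v) - ψ' i (f (i + 1 + 1) v) + d' i (θ (i + 1) v)
      + (u : ℤ) • θ i (d (i + 1) v)) = 0 := by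
  have hθ : x • d' i (θ (i + 1) v)
      = d' i (d' (i + 1) (f (i + 1 + 1) v)) - (u : ℤ) • d' i (f (i + 1) (d (i + 1) v)) := by
    rw [← map_smul, ← hf (i + 1) v, map_sub, map_zsmul]
  have hθd : x • ((u : ℤ) • θ i (d (i + 1) v))
      = (u : ℤ) • d' i (f (i + 1) (d (i + 1) v)) - f i (d i (d (i + 1) v)) := by
    rw [smul_comm, ← hf i (d (i + 1) v), smul_sub, smul_smul,
      Int.isUnit_mul_self u.isUnit, one_smul]
  rw [smul_add, smul_add, smul_sub, ← map_smul, hψ, hψ', hθ, hθd]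
  abel

end Naturality

/-- `G` is indexed after the shift by `k`, so `f` has degree-`0` components and its chain-map
condition carries the sign `(−1)^k`; `z` represents an element of `ann_R(ȳ)`, `R = S/(x)`. -/
theorem psi_z_natural_general {S : Type*} [CommRing S] {x y : S}
    (hxy : IsExactZeroDivisorPair x y)
    (F : ℤ → Type*) [∀ i, AddCommGroup (F i)] [∀ i, Module S (F i)]
    (G : ℤ → Type*) [∀ i, AddCommGroup (G i)] [∀ i, Module S (G i)]
    [∀ i, Module.Free S (G i)]
    (d : ∀ i : ℤ, F (i + 1) →ₗ[S] F i) (d' : ∀ i : ℤ, G (i + 1) →ₗ[S] G i)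
    (ψ : ∀ i : ℤ, F (i + 1 + 1) →ₗ[S] F i) (ψ' : ∀ i : ℤ, G (i + 1 + 1) →ₗ[S] G i)
    (hψ : ∀ (i : ℤ) (v : F (i + 1 + 1)), x • ψ i v = d i (d (i + 1) v))
    (hψ' : ∀ (i : ℤ) (v : G (i + 1 + 1)), x • ψ' i v = d' i (d' (i + 1) v))
    (k : ℤ) (f : ∀ i : ℤ, F i →ₗ[S] G i)
    (θ : ∀ i : ℤ, F (i + 1) →ₗ[S] G i)
    (hf : ∀ (i : ℤ) (v : F (i + 1)),
      d' i (f (i + 1) v) - (((-1 : ℤˣ) ^ k : ℤˣ) : ℤ) • f i (d i v) = x • θ i v)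
    (z : S) (hz : z * y ∈ (Ideal.span {x} : Ideal S)) :
    ∀ (i : ℤ) (v : F (i + 1 + 1)),
      (Ideal.span {x} • ⊤ : Submodule S (G i)).mkQ
          (f i (z • ψ i v) - z • ψ' i (f (i + 1 + 1) v)) =
        (Ideal.span {x} • ⊤ : Submodule S (G i)).mkQ
          (d' i ((-z) • θ (i + 1) v) +
            (((-1 : ℤˣ) ^ k : ℤˣ) : ℤ) • ((-z) • θ i (d (i + 1) v))) := by
  intro i v
  rw [← sub_eq_zero, ← map_sub, Submodule.mkQ_apply, Submodule.Quotient.mk_eq_zero]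
  convert Module.Free.smul_mem_span_smul_top_of_smul_eq_zero hxy.1 hz
    (smul_naturality_defect_eq_zero hψ hψ' hf i v) using 1
  rw [map_smul, map_smul, smul_comm _ (-z)]
  simp only [neg_smul, smul_sub, smul_add]
  abel

/-- Naturality of the degree `−2` operators.  Let `f : F → G` be a degree-`k` morphism of
complexes of finitely generated free `R = S/(x)`-modules (here `G` is indexed after shifting
by `k`, so that `f` has degree `0` components and the chain-map condition carries the sign
`(−1)^k`; a lift `f̃` satisfies `d̃'f̃ − (−1)^k f̃ d̃ = x·θ̃`).  Let `ψ̃, ψ̃'` satisfy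
`x·ψ̃ = d̃²`, `x·ψ̃' = (d̃')²`.  Then for every `z` with `z·y ∈ (x)` (a representative of an
element of `ann_R(ȳ)`), the map `f∘ψ_z − ψ'_z∘f` on the reduced complexes equals
`d'∘(−zθ) − (−1)^{k−1}(−zθ)∘d`, so it is null-homotopic via the degree `k−1` family `−zθ`. -/
theorem psi_z_natural {S : Type*} [CommRing S] {x y : S}
    (hxy : IsExactZeroDivisorPair x y)
    (F : ℤ → Type*) [∀ i, AddCommGroup (F i)] [∀ i, Module S (F i)]
    [∀ i, Module.Free S (F i)] [∀ i, Module.Finite S (F i)]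
    (G : ℤ → Type*) [∀ i, AddCommGroup (G i)] [∀ i, Module S (G i)]
    [∀ i, Module.Free S (G i)] [∀ i, Module.Finite S (G i)]
    (d : ∀ i : ℤ, F (i + 1) →ₗ[S] F i) (d' : ∀ i : ℤ, G (i + 1) →ₗ[S] G i)
    (hcomplexF : ∀ (i : ℤ) (v : F (i + 1 + 1)),
      (Ideal.span {x} • ⊤ : Submodule S (F i)).mkQ (d i (d (i + 1) v)) = 0)
    (hcomplexG : ∀ (i : ℤ) (v : G (i + 1 + 1)),
      (Ideal.span {x} • ⊤ : Submodule S (G i)).mkQ (d' i (d' (i + 1) v)) = 0)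
    (ψ : ∀ i : ℤ, F (i + 1 + 1) →ₗ[S] F i) (ψ' : ∀ i : ℤ, G (i + 1 + 1) →ₗ[S] G i)
    (hψ : ∀ (i : ℤ) (v : F (i + 1 + 1)), x • ψ i v = d i (d (i + 1) v))
    (hψ' : ∀ (i : ℤ) (v : G (i + 1 + 1)), x • ψ' i v = d' i (d' (i + 1) v))
    (k : ℤ) (f : ∀ i : ℤ, F i →ₗ[S] G i)
    (θ : ∀ i : ℤ, F (i + 1) →ₗ[S] G i)
    (hf : ∀ (i : ℤ) (v : F (i + 1)),
      d' i (f (i + 1) v) - (((-1 : ℤˣ) ^ k : ℤˣ) : ℤ) • f i (d i v) = x • θ i v)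
    (z : S) (hz : z * y ∈ (Ideal.span {x} : Ideal S)) :
    ∀ (i : ℤ) (v : F (i + 1 + 1)),
      (Ideal.span {x} • ⊤ : Submodule S (G i)).mkQ
          (f i (z • ψ i v) - z • ψ' i (f (i + 1 + 1) v)) =
        (Ideal.span {x} • ⊤ : Submodule S (G i)).mkQ
          (d' i ((-z) • θ (i + 1) v) +
            (((-1 : ℤˣ) ^ k : ℤˣ) : ℤ) • ((-z) • θ i (d (i + 1) v))) :=
  psi_z_natural_general hxy F G d d' ψ ψ' hψ hψ' k f θ hf z hz
end
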